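/- Let K ⊆ [0,1]^d be a down-closed convex set with 0 ∈ K. For t = 1,…,T let f_t : [0,1]^d → ℝ be non-negative, continuously differentiable, M₁-Lipschitz, continuous DR-submodular functions with surrogate potentials F_t. Then for any points x_1,…,x_T ∈ K and any sequence of time-varying comparators u_1,…,u_T ∈ K: (1/e) Σ_{t=1}^T f_t(u_t) − Σ_{t=1}^T f_t(h(x_t)) ≤ (1 − e^{−1}) Σ_{t=1}^T ⟨∇F_t(x_t), u_t − x_t⟩. Hence the (1/e)-dynamic regret of the played points h(x_t) is at most (1 − e^{−1}) times the dynamic linear regret of (x_t) on the surrogate gradients. -/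

import Mathlib

open scoped RealInnerProductSpace

noncomputable section

/-- Membership in the unit box `[0,1]^d`. -/
def inBox {d : ℕ} (x : EuclideanSpace ℝ (Fin d)) : Prop :=
  ∀ i, x i ∈ Set.Icc (0 : ℝ) 1

/-- Continuous DR-submodularity: the gradient is coordinate-wise antitone on `[0,1]^d`. -/
def DRSubmodular {d : ℕ} (f : EuclideanSpace ℝ (Fin d) → ℝ) : Prop :=
  ∀ x y : EuclideanSpace ℝ (Fin d), inBox x → inBox y → (∀ i, x i ≤ y i) →
    ∀ i, gradient f y i ≤ gradient f x i

/-- The exponential reparametrization `h_z(x) = 1 - e^{-z x}` (coordinate-wise). -/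
def hmap {d : ℕ} (z : ℝ) (x : EuclideanSpace ℝ (Fin d)) : EuclideanSpace ℝ (Fin d) :=
  WithLp.toLp 2 (fun i => 1 - Real.exp (-(z * x i)))

/-- Coordinate-wise probabilistic sum `x ⊕ y = 1 - (1-x) ⊙ (1-y)`. -/
def psum {d : ℕ} (x y : EuclideanSpace ℝ (Fin d)) : EuclideanSpace ℝ (Fin d) :=
  WithLp.toLp 2 (fun i => 1 - (1 - x i) * (1 - y i))

/-- Coordinate-wise (Hadamard) product. -/
def had {d : ℕ} (u v : EuclideanSpace ℝ (Fin d)) : EuclideanSpace ℝ (Fin d) :=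
  WithLp.toLp 2 (fun i => u i * v i)

/-- Coordinate-wise exponential `e^{-z x}`. -/
def expv {d : ℕ} (z : ℝ) (x : EuclideanSpace ℝ (Fin d)) : EuclideanSpace ℝ (Fin d) :=
  WithLp.toLp 2 (fun i => Real.exp (-(z * x i)))

/-- The surrogate potential
`F(x) = ∫₀¹ (e^{z-1} / ((1-e⁻¹) z)) (f(1 - e^{-z x}) - f(0)) dz`. -/
def surrogate {d : ℕ} (f : EuclideanSpace ℝ (Fin d) → ℝ)
    (x : EuclideanSpace ℝ (Fin d)) : ℝ :=
  ∫ z in (0:ℝ)..1, (Real.exp (z - 1) / ((1 - Real.exp (-1)) * z)) * (f (hmap z x) - f 0)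

/-- A set `K ⊆ [0,1]^d` is down-closed if `y ∈ K` and `0 ≤ x ≤ y` imply `x ∈ K`. -/
def DownClosed {d : ℕ} (K : Set (EuclideanSpace ℝ (Fin d))) : Prop :=
  ∀ y ∈ K, ∀ x : EuclideanSpace ℝ (Fin d), (∀ i, 0 ≤ x i) → (∀ i, x i ≤ y i) → x ∈ K

/-! ### Auxiliary machinery -/

abbrev EE (d : ℕ) := EuclideanSpace ℝ (Fin d)

variable {d : ℕ}

/-- diagonal continuous linear map -/
def diag {d : ℕ} (a : Fin d → ℝ) : EE d →L[ℝ] EE d :=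
  LinearMap.toContinuousLinearMap
    { toFun := fun v => WithLp.toLp 2 (fun i => a i * v i)
      map_add' := by intro v w; ext i; simp [mul_add]
      map_smul' := by intro c v; ext i; simp [smul_eq_mul]; ring }

@[simp] lemma diag_apply (a : Fin d → ℝ) (v : EE d) (i : Fin d) : diag a v i = a i * v i := rfl

lemma abs_coord_le_norm (w : EE d) (i : Fin d) : |w i| ≤ ‖w‖ := by
  rw [EuclideanSpace.norm_eq]
  have h1 : |w i| = Real.sqrt (‖w i‖ ^ 2) := by
    rw [Real.norm_eq_abs, Real.sqrt_sq_eq_abs, abs_abs]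
  rw [h1]
  apply Real.sqrt_le_sqrt
  exact Finset.single_le_sum (f := fun j => ‖w j‖ ^ 2) (fun j _ => sq_nonneg _) (Finset.mem_univ i)

lemma diag_norm_le (a : Fin d → ℝ) (C : ℝ) (hC : 0 ≤ C) (h : ∀ i, |a i| ≤ C) : ‖diag a‖ ≤ C := by
  apply ContinuousLinearMap.opNorm_le_bound _ hC
  intro v
  rw [EuclideanSpace.norm_eq, EuclideanSpace.norm_eq]
  rw [← Real.sqrt_sq hC, ← Real.sqrt_mul (by positivity)]
  apply Real.sqrt_le_sqrt
  rw [Finset.mul_sum]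
  apply Finset.sum_le_sum
  intro i _
  simp only [diag_apply, Real.norm_eq_abs, abs_mul, mul_pow]
  have h2 : |a i| ^ 2 ≤ C ^ 2 := by
    have := h i
    have h0 : (0:ℝ) ≤ |a i| := abs_nonneg _
    nlinarith
  nlinarith [sq_nonneg (|v i|), sq_nonneg (|a i|)]

lemma inner_grad (f : EE d → ℝ) (a v : EE d) :
    fderiv ℝ f a v = ∑ i, gradient f a i * v i := by
  have h : ⟪gradient f a, v⟫ = fderiv ℝ f a v := by
    rw [gradient]; exact InnerProductSpace.toDual_symm_apply
  rw [← h, PiLp.inner_apply]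
  simp [RCLike.inner_apply, mul_comm]

lemma norm_gradient_eq (f : EE d → ℝ) (a : EE d) : ‖gradient f a‖ = ‖fderiv ℝ f a‖ := by
  rw [gradient]
  exact LinearIsometryEquiv.norm_map _ _

lemma scalar_hasDerivAt (c t : ℝ) :
    HasDerivAt (fun s : ℝ => 1 - Real.exp (-(s * c))) (c * Real.exp (-(t * c))) t := by
  have h1 : HasDerivAt (fun s : ℝ => -(s * c)) (-c) t := by
    simpa using ((hasDerivAt_id t).mul_const c).fun_neg
  have h2 := (Real.hasDerivAt_exp (-(t * c))).comp t h1
  have h3 := (hasDerivAt_const t (1:ℝ)).sub h2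
  exact h3.congr_deriv (by ring)

lemma hmap_hasFDerivAt (z : ℝ) (x : EE d) :
    HasFDerivAt (hmap z) (diag (fun i => z * Real.exp (-(z * x i)))) x := by
  rw [← hasFDerivWithinAt_univ, hasFDerivWithinAt_piLp]
  intro i
  rw [hasFDerivWithinAt_univ]
  have hcoord := PiLp.hasFDerivAt_apply (𝕜 := ℝ) 2 x i
  have h2 : HasDerivAt (fun t : ℝ => 1 - Real.exp (-(z * t))) (z * Real.exp (-(z * x i))) (x i) := by
    have ha : HasDerivAt (fun t : ℝ => -(z * t)) (-z) (x i) := by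
      simpa using ((hasDerivAt_id (x i)).const_mul z).fun_neg
    have hb := (Real.hasDerivAt_exp (-(z * x i))).comp (x i) ha
    have hc := (hasDerivAt_const (x i) (1:ℝ)).sub hb
    exact hc.congr_deriv (by ring)
  have h3 := h2.comp_hasFDerivAt x hcoord
  have e : (PiLp.proj 2 (fun _ : Fin d => ℝ) i ∘L diag (fun i => z * Real.exp (-(z * x i)))) =
      (z * Real.exp (-(z * x i))) • PiLp.proj 2 (fun _ : Fin d => ℝ) i := by
    ext v; simp [diag_apply]
  rw [e]; exact h3

lemma hmap_hasDerivAt (x : EE d) (z : ℝ) :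
    HasDerivAt (fun s => hmap s x) (WithLp.toLp 2 (fun i => x i * Real.exp (-(z * x i)))) z := by
  rw [hasDerivAt_iff_hasFDerivAt, ← hasFDerivWithinAt_univ, hasFDerivWithinAt_piLp]
  intro i
  rw [hasFDerivWithinAt_univ]
  have h1 : HasDerivAt (fun s : ℝ => 1 - Real.exp (-(s * x i))) (x i * Real.exp (-(z * x i))) z :=
    scalar_hasDerivAt (x i) z
  rw [hasDerivAt_iff_hasFDerivAt] at h1
  have e : PiLp.proj 2 (fun _ : Fin d => ℝ) i ∘L ContinuousLinearMap.toSpanSingleton ℝ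
      (WithLp.toLp 2 (fun i => x i * Real.exp (-(z * x i)))) =
      ContinuousLinearMap.toSpanSingleton ℝ (x i * Real.exp (-(z * x i))) := by
    ext; simp
  rw [e]; exact h1

def Box (d : ℕ) : Set (EE d) := {x | inBox x}

lemma convex_Box : Convex ℝ (Box d) := by
  intro x hx y hy α β hα hβ hαβ
  intro i
  have hxi := hx i; have hyi := hy i
  simp only [Set.mem_Icc] at hxi hyi ⊢
  have h : (α • x + β • y) i = α * x i + β * y i := rfl
  rw [h]
  constructor <;> nlinarith

section lemA
variable {f : EE d → ℝ} (hf : ContDiff ℝ 1 f) (hDR : DRSubmodular f)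
variable {a b : EE d} (ha : inBox a) (hb : inBox b) (hab : ∀ i, a i ≤ b i)

include ha hb hab in
lemma seg_inBox {s : ℝ} (hs : s ∈ Set.Icc (0:ℝ) 1) : inBox (a + s • (b - a)) := by
  intro i
  have hai := ha i; have hbi := hb i; have h := hab i
  simp only [Set.mem_Icc] at *
  have hh : (a + s • (b - a)) i = a i + s * (b i - a i) := rfl
  rw [hh]
  constructor <;> nlinarith [hs.1, hs.2]

include hf in
lemma line_hasDerivAt (s : ℝ) :
    HasDerivAt (fun s : ℝ => f (a + s • (b - a))) (fderiv ℝ f (a + s • (b - a)) (b - a)) s := by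
  have h1 : HasDerivAt (fun s : ℝ => a + s • (b - a)) (b - a) s := by
    have := ((hasDerivAt_id s).smul_const (b - a)).const_add a
    simpa using this
  exact ((hf.differentiable one_ne_zero _).hasFDerivAt).comp_hasDerivAt s h1

include hf in
lemma line_deriv_continuous :
    Continuous (fun s : ℝ => fderiv ℝ f (a + s • (b - a)) (b - a)) := by
  have h1 : Continuous fun s : ℝ => a + s • (b - a) := by continuity
  exact ((hf.continuous_fderiv one_ne_zero).comp h1).clm_apply continuous_const

include hf in
lemma ftc_line :
    f b - f a = ∫ s in (0:ℝ)..1, fderiv ℝ f (a + s • (b - a)) (b - a) := by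
  have h := intervalIntegral.integral_eq_sub_of_hasDerivAt
    (f := fun s : ℝ => f (a + s • (b - a)))
    (f' := fun s : ℝ => fderiv ℝ f (a + s • (b - a)) (b - a))
    (fun s _ => line_hasDerivAt hf s)
    ((line_deriv_continuous hf).intervalIntegrable 0 1)
  rw [h]
  congr 1 <;> simp

include hDR ha hb hab in
lemma deriv_compare {s t : ℝ} (hs : s ∈ Set.Icc (0:ℝ) 1) (ht : t ∈ Set.Icc (0:ℝ) 1)
    (hst : s ≤ t) :
    fderiv ℝ f (a + t • (b - a)) (b - a) ≤ fderiv ℝ f (a + s • (b - a)) (b - a) := by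
  rw [inner_grad, inner_grad]
  apply Finset.sum_le_sum
  intro i _
  have hv : (0:ℝ) ≤ (b - a) i := by
    have h : (b - a) i = b i - a i := rfl
    rw [h]; linarith [hab i]
  apply mul_le_mul_of_nonneg_right _ hv
  apply hDR _ _ (seg_inBox ha hb hab hs) (seg_inBox ha hb hab ht)
  intro i
  have h : ∀ u : ℝ, (a + u • (b - a)) i = a i + u * (b i - a i) := fun u => rfl
  rw [h, h]
  nlinarith [hab i]

include hf hDR ha hb hab in
lemma lemA1 : f b - f a ≤ fderiv ℝ f a (b - a) := by
  rw [ftc_line hf]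
  have h0 : fderiv ℝ f a (b - a) = ∫ s in (0:ℝ)..1, fderiv ℝ f (a + (0:ℝ) • (b - a)) (b - a) := by
    simp
  rw [h0]
  apply intervalIntegral.integral_mono_on (by norm_num)
    ((line_deriv_continuous hf).intervalIntegrable 0 1)
    (intervalIntegrable_const)
  intro s hs
  exact deriv_compare hDR ha hb hab (Set.mem_Icc.2 ⟨le_refl 0, zero_le_one⟩) hs hs.1

include hf hDR ha hb hab in
lemma lemA2 : fderiv ℝ f b (b - a) ≤ f b - f a := by
  rw [ftc_line hf]
  have h1 : fderiv ℝ f b (b - a) = ∫ s in (0:ℝ)..1, fderiv ℝ f (a + (1:ℝ) • (b - a)) (b - a) := by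
    simp
  rw [h1]
  apply intervalIntegral.integral_mono_on (by norm_num)
    (intervalIntegrable_const)
    ((line_deriv_continuous hf).intervalIntegrable 0 1)
  intro s hs
  exact deriv_compare hDR ha hb hab hs (Set.mem_Icc.2 ⟨zero_le_one, le_refl 1⟩) hs.2

end lemA

section lemB
variable {f : EE d → ℝ} (hf : ContDiff ℝ 1 f) (hDR : DRSubmodular f)
  (hpos : ∀ y, inBox y → 0 ≤ f y)

include hf hDR hpos in
lemma lemB {u w : EE d} (hu : inBox u) (hw : inBox w) {c : ℝ} (hc0 : 0 ≤ c) (hc1 : c < 1)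
    (hwc : ∀ i, w i ≤ c) : (1 - c) * f u ≤ f (psum u w) := by
  rcases eq_or_lt_of_le hc0 with hc | hc
  · -- c = 0, so w = 0 and psum u w = u
    have hceq : c = 0 := hc.symm
    subst hceq
    have hw0 : ∀ i, w i = 0 := fun i => le_antisymm (hwc i) (hw i).1
    have hpu : psum u w = u := by
      ext i; simp [psum, hw0 i]
    rw [hpu]
    simp
  · set S : ℝ := 1 / c with hS
    have hS1 : 1 < S := by
      rw [hS]; rw [lt_div_iff₀ hc]; linarith
    set v : EE d := WithLp.toLp 2 (fun i => (1 - u i) * w i) with hv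
    have hvi : ∀ i, v i = (1 - u i) * w i := fun i => rfl
    have hv0 : ∀ i, 0 ≤ v i := by
      intro i; rw [hvi]
      have h1 := (hu i); have h2 := (hw i)
      simp only [Set.mem_Icc] at h1 h2
      nlinarith [h1.2, h2.1]
    have hpsum : psum u w = u + v := by
      ext i
      have h1 : (u + v) i = u i + v i := rfl
      rw [h1, hvi]
      simp [psum]; ring
    have hbox1 : inBox (u + v) := by
      rw [← hpsum]
      intro i
      have h1 := (hu i); have h2 := (hw i)
      simp only [Set.mem_Icc] at h1 h2 ⊢
      constructor
      · simp only [psum]; nlinarith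
      · simp only [psum]; nlinarith
    have hboxS : inBox (u + S • v) := by
      intro i
      have h1 := (hu i); have h2 := (hw i); have h3 := hwc i
      have hap : (u + S • v) i = u i + S * ((1 - u i) * w i) := rfl
      rw [hap]
      simp only [Set.mem_Icc] at h1 h2 ⊢
      have hSpos : 0 < S := by linarith
      constructor
      · nlinarith [mul_nonneg (le_of_lt hSpos) (mul_nonneg (by linarith [h1.2] : (0:ℝ) ≤ 1 - u i) h2.1)]
      · -- u i + (1/c) (1-u_i) w_i ≤ u i + (1-u_i) = 1
        have hkey : S * ((1 - u i) * w i) ≤ 1 - u i := by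
          have : w i ≤ c := h3
          calc S * ((1 - u i) * w i) ≤ S * ((1 - u i) * c) := by
                apply mul_le_mul_of_nonneg_left _ (le_of_lt hSpos)
                apply mul_le_mul_of_nonneg_left h3 (by linarith)
            _ = 1 - u i := by
                rw [hS]; field_simp
        linarith
    have hord1 : ∀ i, u i ≤ (u + v) i := by
      intro i
      have h1 : (u + v) i = u i + v i := rfl
      rw [h1]; linarith [hv0 i]
    have hordS : ∀ i, (u + v) i ≤ (u + S • v) i := by
      intro i
      have h1 : (u + v) i = u i + v i := rfl
      have h2 : (u + S • v) i = u i + S * v i := rfl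
      rw [h1, h2]
      nlinarith [hv0 i]
    have hsub1 : (u + v) - u = v := add_sub_cancel_left u v
    have hsubS : (u + S • v) - (u + v) = (S - 1) • v := by
      rw [sub_smul, one_smul]; abel
    -- lemA2 : D ≤ f (u+v) - f u
    have hA2 := lemA2 hf hDR hu hbox1 hord1
    rw [hsub1] at hA2
    -- lemA1 : f (u + S•v) - f (u+v) ≤ fderiv f (u+v) ((S-1)•v)
    have hA1 := lemA1 hf hDR hbox1 hboxS hordS
    rw [hsubS] at hA1
    rw [ContinuousLinearMap.map_smul, smul_eq_mul] at hA1
    have hfS : 0 ≤ f (u + S • v) := hpos _ hboxS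
    have hfu : 0 ≤ f u := hpos _ hu
    rw [hpsum]
    set D := fderiv ℝ f (u + v) v
    have hcS : c * S = 1 := by rw [hS]; field_simp
    nlinarith [hA1, hA2, hfS, hfu, hS1, hc]

end lemB


section surrogateDeriv
variable {d : ℕ}

/-- coefficient of the surrogate integrand -/
def cz (z : ℝ) : ℝ := Real.exp (z - 1) / ((1 - Real.exp (-1)) * z)

lemma one_sub_exp_neg_one_pos : (0:ℝ) < 1 - Real.exp (-1) := by
  have h : Real.exp (-1) < Real.exp 0 := Real.exp_lt_exp.2 (by norm_num)
  rw [Real.exp_zero] at h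
  linarith

lemma cz_pos {z : ℝ} (hz : 0 < z) : 0 < cz z := by
  apply div_pos (Real.exp_pos _)
  exact mul_pos one_sub_exp_neg_one_pos hz

lemma cz_measurable : Measurable cz := by
  apply Measurable.div
  · exact (Real.continuous_exp.comp (continuous_id.sub continuous_const)).measurable
  · exact (continuous_const.mul continuous_id).measurable

def diagL (d : ℕ) : (Fin d → ℝ) →L[ℝ] (EE d →L[ℝ] EE d) :=
  LinearMap.toContinuousLinearMap
    { toFun := fun a => diag a
      map_add' := by
        intro a b; ext v i
        show ((a + b) i) * v i = a i * v i + b i * v i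
        simp [add_mul]
      map_smul' := by
        intro c a; ext v i
        show ((c • a) i) * v i = c * (a i * v i)
        simp [smul_eq_mul]; ring }

@[simp] lemma diagL_apply (a : Fin d → ℝ) : diagL d a = diag a := rfl

lemma hmap_cont_z (x : EE d) : Continuous (fun z => hmap z x) :=
  continuous_iff_continuousAt.2 (fun z => (hmap_hasDerivAt x z).continuousAt)

lemma norm_le_sqrt_mul (w : EE d) (C : ℝ) (hC : 0 ≤ C) (h : ∀ i, |w i| ≤ C) :
    ‖w‖ ≤ Real.sqrt d * C := by
  rw [EuclideanSpace.norm_eq]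
  have : Real.sqrt d * C = Real.sqrt (d * C ^ 2) := by
    rw [Real.sqrt_mul (by positivity), Real.sqrt_sq hC]
  rw [this]
  apply Real.sqrt_le_sqrt
  calc ∑ i, ‖w i‖ ^ 2 ≤ ∑ _i : Fin d, C ^ 2 := by
        apply Finset.sum_le_sum
        intro i _
        rw [Real.norm_eq_abs]
        nlinarith [h i, abs_nonneg (w i)]
    _ = d * C ^ 2 := by simp [Finset.sum_const, mul_comm]

/-- coefficient vector for the `x`-derivative of `hmap z`. -/
def coefv (z : ℝ) (x : EE d) : Fin d → ℝ := fun i => z * Real.exp (-(z * x i))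

lemma f_hmap_hasFDerivAt (f : EE d → ℝ) (hf : ContDiff ℝ 1 f) (z : ℝ) (x : EE d) :
    HasFDerivAt (fun x => cz z * (f (hmap z x) - f 0))
      (cz z • ((fderiv ℝ f (hmap z x)).comp (diag (coefv z x)))) x := by
  have h1 := ((hf.differentiable one_ne_zero _).hasFDerivAt.comp x (hmap_hasFDerivAt z x)).sub_const (f 0)
  have h2 := h1.const_mul (cz z)
  exact h2

end surrogateDeriv
section surrogateMain
open MeasureTheory
variable {d : ℕ} {f : EE d → ℝ}

lemma two_le_exp_one : (2:ℝ) ≤ Real.exp 1 := by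
  have := Real.add_one_le_exp 1; linarith

lemma one_sub_exp_le {t : ℝ} (ht : 0 ≤ t) : 1 - Real.exp (-t) ≤ t := by
  have := Real.add_one_le_exp (-t); linarith

lemma hmap_coord_nonneg {z : ℝ} (hz : 0 ≤ z) {x : EE d} (hx : inBox x) (i : Fin d) :
    0 ≤ hmap z x i ∧ hmap z x i ≤ z * x i := by
  have h1 := (hx i).1
  have ht : 0 ≤ z * x i := mul_nonneg hz h1
  constructor
  · have : Real.exp (-(z * x i)) ≤ Real.exp 0 := Real.exp_le_exp.2 (by linarith)
    rw [Real.exp_zero] at this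
    simp only [hmap]
    linarith
  · have := one_sub_exp_le ht
    simpa [hmap] using this

lemma hmap_norm_le_z {z : ℝ} (hz0 : 0 ≤ z) (hz1 : z ≤ 1) {x : EE d} (hx : inBox x) :
    ‖hmap z x‖ ≤ Real.sqrt d * z := by
  apply norm_le_sqrt_mul _ _ hz0
  intro i
  obtain ⟨h1, h2⟩ := hmap_coord_nonneg hz0 hx i
  rw [abs_of_nonneg h1]
  calc hmap z x i ≤ z * x i := h2
    _ ≤ z * 1 := by nlinarith [(hx i).2]
    _ = z := mul_one z

lemma surrogate_deriv (hf : ContDiff ℝ 1 f) (x₀ : EE d) (hx₀ : inBox x₀) :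
    IntervalIntegrable (fun z => cz z • ((fderiv ℝ f (hmap z x₀)).comp (diag (coefv z x₀))))
      volume 0 1 ∧
    HasFDerivAt (surrogate f)
      (∫ z in (0:ℝ)..1, cz z • ((fderiv ℝ f (hmap z x₀)).comp (diag (coefv z x₀)))) x₀ := by
  obtain ⟨M, hM⟩ := (isCompact_closedBall (0 : EE d)
      (Real.sqrt d * Real.exp 1)).exists_bound_of_continuousOn
      ((hf.continuous_fderiv one_ne_zero).continuousOn)
  set M' := max M 0 with hM'def
  have hM'0 : (0:ℝ) ≤ M' := le_max_right _ _
  have hMle : ∀ y : EE d, ‖y‖ ≤ Real.sqrt d * Real.exp 1 → ‖fderiv ℝ f y‖ ≤ M' := by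
    intro y hy
    refine le_trans (hM y ?_) (le_max_left _ _)
    simpa [Metric.mem_closedBall, dist_zero_right] using hy
  have hsqrtd : (0:ℝ) ≤ Real.sqrt d := Real.sqrt_nonneg _
  have hexp1 : (0:ℝ) < Real.exp 1 := Real.exp_pos _
  -- coordinates of points in the ball
  have hcoordball : ∀ x ∈ Metric.ball x₀ 1, ∀ i, -1 ≤ x i ∧ x i ≤ 2 := by
    intro x hx i
    have h1 : |x i - x₀ i| ≤ ‖x - x₀‖ := by
      have := abs_coord_le_norm (x - x₀) i
      simpa using this
    have h2 : ‖x - x₀‖ < 1 := by rwa [Metric.mem_ball, dist_eq_norm] at hx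
    have h3 := (hx₀ i).1; have h4 := (hx₀ i).2
    have h5 := abs_le.1 h1
    constructor <;> linarith [h5.1, h5.2]
  -- norm bounds over the ball
  have hmapball : ∀ z ∈ Set.Ioc (0:ℝ) 1, ∀ x ∈ Metric.ball x₀ 1,
      ‖hmap z x‖ ≤ Real.sqrt d * Real.exp 1 := by
    intro z hz x hx
    apply norm_le_sqrt_mul _ _ (le_of_lt hexp1)
    intro i
    obtain ⟨hxi1, hxi2⟩ := hcoordball x hx i
    have he1 : Real.exp (-(z * x i)) ≤ Real.exp 1 := by
      apply Real.exp_le_exp.2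
      nlinarith [hz.1, hz.2]
    have he0 : 0 < Real.exp (-(z * x i)) := Real.exp_pos _
    rw [abs_le]
    constructor
    · simp only [hmap]; linarith
    · simp only [hmap]; linarith [two_le_exp_one]
  have hdiagball : ∀ z ∈ Set.Ioc (0:ℝ) 1, ∀ x ∈ Metric.ball x₀ 1,
      ‖diag (coefv z x)‖ ≤ z * Real.exp 1 := by
    intro z hz x hx
    apply diag_norm_le _ _ (mul_nonneg (le_of_lt hz.1) (le_of_lt hexp1))
    intro i
    obtain ⟨hxi1, hxi2⟩ := hcoordball x hx i
    have he1 : Real.exp (-(z * x i)) ≤ Real.exp 1 := by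
      apply Real.exp_le_exp.2
      nlinarith [hz.1, hz.2]
    have he0 : 0 < Real.exp (-(z * x i)) := Real.exp_pos _
    simp only [coefv]
    rw [abs_of_nonneg (mul_nonneg (le_of_lt hz.1) (le_of_lt he0))]
    exact mul_le_mul_of_nonneg_left he1 (le_of_lt hz.1)
  -- measurability of the integrand (for each x)
  have hmeas : ∀ x : EE d, Measurable fun z => cz z * (f (hmap z x) - f 0) := by
    intro x
    exact cz_measurable.mul
      (((hf.continuous.comp (hmap_cont_z x)).measurable).sub measurable_const)
  -- norm bound on F' over the ball
  have hF'bound : ∀ z ∈ Set.Ioc (0:ℝ) 1, ∀ x ∈ Metric.ball x₀ 1,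
      ‖cz z • ((fderiv ℝ f (hmap z x)).comp (diag (coefv z x)))‖
        ≤ Real.exp 1 * M' / (1 - Real.exp (-1)) := by
    intro z hz x hx
    have hcz := cz_pos hz.1
    have h1 : ‖(fderiv ℝ f (hmap z x)).comp (diag (coefv z x))‖ ≤ M' * (z * Real.exp 1) := by
      calc ‖(fderiv ℝ f (hmap z x)).comp (diag (coefv z x))‖
          ≤ ‖fderiv ℝ f (hmap z x)‖ * ‖diag (coefv z x)‖ := ContinuousLinearMap.opNorm_comp_le _ _
        _ ≤ M' * (z * Real.exp 1) := by
            apply mul_le_mul (hMle _ (hmapball z hz x hx)) (hdiagball z hz x hx)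
              (norm_nonneg _) hM'0
    have hns := norm_smul (cz z) ((fderiv ℝ f (hmap z x)).comp (diag (coefv z x)))
    rw [hns, Real.norm_eq_abs, abs_of_pos hcz]
    calc cz z * ‖(fderiv ℝ f (hmap z x)).comp (diag (coefv z x))‖
        ≤ cz z * (M' * (z * Real.exp 1)) := by
          apply mul_le_mul_of_nonneg_left h1 (le_of_lt hcz)
      _ = (Real.exp (z - 1) * M' * Real.exp 1) / (1 - Real.exp (-1)) := by
          have hz0 : z ≠ 0 := ne_of_gt hz.1
          have hone : (1 - Real.exp (-1)) ≠ 0 := ne_of_gt one_sub_exp_neg_one_pos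
          rw [cz]
          field_simp
      _ ≤ Real.exp 1 * M' / (1 - Real.exp (-1)) := by
          apply (div_le_div_iff_of_pos_right one_sub_exp_neg_one_pos).2
          have hez : Real.exp (z - 1) ≤ 1 := by
            have h := Real.exp_le_exp.2 (show z - 1 ≤ 0 by linarith [hz.2])
            rwa [Real.exp_zero] at h
          nlinarith [mul_nonneg (mul_nonneg (sub_nonneg.2 hez) hM'0) (le_of_lt hexp1)]
  -- integrability of F x₀
  have hF_int : IntervalIntegrable (fun z => cz z * (f (hmap z x₀) - f 0)) volume 0 1 := by
    rw [intervalIntegrable_iff_integrableOn_Ioc_of_le zero_le_one]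
    apply Integrable.mono' (integrable_const (M' * Real.sqrt d / (1 - Real.exp (-1))))
      ((hmeas x₀).aestronglyMeasurable.restrict)
    rw [ae_restrict_iff' measurableSet_Ioc]
    apply Filter.Eventually.of_forall
    intro z hz
    have hcz := cz_pos hz.1
    have hlip : ‖f (hmap z x₀) - f 0‖ ≤ M' * ‖hmap z x₀ - 0‖ := by
      apply Convex.norm_image_sub_le_of_norm_fderiv_le
        (fun y _ => (hf.differentiable one_ne_zero).differentiableAt)
        (fun y hy => hMle y (by simpa [Metric.mem_closedBall, dist_zero_right] using hy))
        (convex_closedBall (0 : EE d) (Real.sqrt d * Real.exp 1))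
        (Metric.mem_closedBall_self (mul_nonneg hsqrtd (le_of_lt hexp1)))
      simp only [Metric.mem_closedBall, dist_zero_right]
      calc ‖hmap z x₀‖ ≤ Real.sqrt d * z := hmap_norm_le_z (le_of_lt hz.1) hz.2 hx₀
        _ ≤ Real.sqrt d * Real.exp 1 := by nlinarith [hz.2, two_le_exp_one, hz.1]
    have hnorm : ‖hmap z x₀‖ ≤ Real.sqrt d * z := hmap_norm_le_z (le_of_lt hz.1) hz.2 hx₀
    rw [Real.norm_eq_abs, abs_mul, abs_of_pos hcz]
    calc cz z * |f (hmap z x₀) - f 0|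
        ≤ cz z * (M' * (Real.sqrt d * z)) := by
          apply mul_le_mul_of_nonneg_left _ (le_of_lt hcz)
          calc |f (hmap z x₀) - f 0| = ‖f (hmap z x₀) - f 0‖ := rfl
            _ ≤ M' * ‖hmap z x₀ - 0‖ := hlip
            _ = M' * ‖hmap z x₀‖ := by rw [sub_zero]
            _ ≤ M' * (Real.sqrt d * z) := mul_le_mul_of_nonneg_left hnorm hM'0
      _ = Real.exp (z - 1) * M' * Real.sqrt d / (1 - Real.exp (-1)) := by
          have hz0 : z ≠ 0 := ne_of_gt hz.1
          have hone : (1 - Real.exp (-1)) ≠ 0 := ne_of_gt one_sub_exp_neg_one_pos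
          rw [cz]; field_simp
      _ ≤ M' * Real.sqrt d / (1 - Real.exp (-1)) := by
          apply (div_le_div_iff_of_pos_right one_sub_exp_neg_one_pos).2
          have hez : Real.exp (z - 1) ≤ 1 := by
            have h := Real.exp_le_exp.2 (show z - 1 ≤ 0 by linarith [hz.2])
            rwa [Real.exp_zero] at h
          nlinarith [mul_nonneg (mul_nonneg (sub_nonneg.2 hez) hM'0) hsqrtd]
  -- continuity of F' on Ioc
  have hF'cont : ContinuousOn
      (fun z => cz z • ((fderiv ℝ f (hmap z x₀)).comp (diag (coefv z x₀))))
      (Set.Ioc (0:ℝ) 1) := by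
    have hc_cont : ContinuousOn cz (Set.Ioc (0:ℝ) 1) := by
      apply ContinuousOn.div
      · exact (Real.continuous_exp.comp (continuous_id.sub continuous_const)).continuousOn
      · exact (continuous_const.mul continuous_id).continuousOn
      · intro z hz
        exact ne_of_gt (mul_pos one_sub_exp_neg_one_pos hz.1)
    have hA : Continuous fun z => fderiv ℝ f (hmap z x₀) :=
      (hf.continuous_fderiv one_ne_zero).comp (hmap_cont_z x₀)
    have hD : Continuous fun z => diag (coefv z x₀) := by
      have : Continuous fun z => coefv z x₀ := by
        apply continuous_pi
        intro i
        exact continuous_id.mul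
          (Real.continuous_exp.comp ((continuous_id.mul continuous_const).neg))
      exact (diagL d).continuous.comp this
    exact hc_cont.smul (hA.clm_comp hD).continuousOn
  have hF'meas : AEStronglyMeasurable
      (fun z => cz z • ((fderiv ℝ f (hmap z x₀)).comp (diag (coefv z x₀))))
      (volume.restrict (Set.uIoc (0:ℝ) 1)) := by
    rw [Set.uIoc_of_le zero_le_one]
    exact hF'cont.aestronglyMeasurable measurableSet_Ioc
  -- integrability of F' x₀
  have hF'int : IntervalIntegrable
      (fun z => cz z • ((fderiv ℝ f (hmap z x₀)).comp (diag (coefv z x₀)))) volume 0 1 := by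
    rw [intervalIntegrable_iff_integrableOn_Ioc_of_le zero_le_one]
    apply Integrable.mono' (integrable_const (Real.exp 1 * M' / (1 - Real.exp (-1))))
      (hF'cont.aestronglyMeasurable measurableSet_Ioc)
    rw [ae_restrict_iff' measurableSet_Ioc]
    exact Filter.Eventually.of_forall fun z hz =>
      hF'bound z hz x₀ (Metric.mem_ball_self one_pos)
  refine ⟨hF'int, ?_⟩
  have key := intervalIntegral.hasFDerivAt_integral_of_dominated_of_fderiv_le
    (𝕜 := ℝ)
    (F := fun x z => cz z * (f (hmap z x) - f 0))
    (F' := fun x z => cz z • ((fderiv ℝ f (hmap z x)).comp (diag (coefv z x))))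
    (x₀ := x₀) (a := 0) (b := 1) (bound := fun _ => Real.exp 1 * M' / (1 - Real.exp (-1)))
    (μ := volume) (Metric.ball_mem_nhds x₀ one_pos)
    (Filter.Eventually.of_forall fun x => ((hmeas x).aestronglyMeasurable).restrict)
    hF_int
    hF'meas
    ?_ (intervalIntegrable_const) ?_
  · exact key
  · apply Filter.Eventually.of_forall
    intro z hz x hx
    rw [Set.uIoc_of_le zero_le_one] at hz
    exact hF'bound z hz x hx
  · apply Filter.Eventually.of_forall
    intro z hz x hx
    exact f_hmap_hasFDerivAt f hf z x

end surrogateMain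
section perT
open MeasureTheory
variable {d : ℕ} {f : EE d → ℝ}

lemma cont_into_EE {g : ℝ → Fin d → ℝ} (h : ∀ i, Continuous fun z => g z i) :
    Continuous fun z => (WithLp.toLp 2 (g z) : EE d) :=
  (PiLp.continuousLinearEquiv 2 ℝ (fun _ : Fin d => ℝ)).symm.continuous.comp (continuous_pi h)

lemma hmap_inBox {z : ℝ} (hz0 : 0 ≤ z) {x : EE d} (hx : inBox x) : inBox (hmap z x) := by
  intro i
  have h1 := (hx i).1
  have ht : 0 ≤ z * x i := mul_nonneg hz0 h1
  have he : Real.exp (-(z * x i)) ≤ 1 := by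
    have h := Real.exp_le_exp.2 (show -(z * x i) ≤ 0 by linarith)
    rwa [Real.exp_zero] at h
  have he0 : 0 < Real.exp (-(z * x i)) := Real.exp_pos _
  constructor
  · simp only [hmap]; linarith
  · simp only [hmap]; linarith

lemma psum_inBox {u w : EE d} (hu : inBox u) (hw : inBox w) : inBox (psum u w) := by
  intro i
  have h1 := (hu i).1; have h2 := (hu i).2
  have h3 := (hw i).1; have h4 := (hw i).2
  simp only [psum, Set.mem_Icc]
  constructor <;> nlinarith

lemma zero_inBox : inBox (0 : EE d) := by
  intro i
  simp

lemma grad_surrogate_inner (hf : ContDiff ℝ 1 f) (x₀ : EE d) (hx₀ : inBox x₀) (v : EE d) :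
    ⟪gradient (surrogate f) x₀, v⟫ =
      ∫ z in (0:ℝ)..1, cz z * (fderiv ℝ f (hmap z x₀)) (diag (coefv z x₀) v) := by
  obtain ⟨hint, hder⟩ := surrogate_deriv hf x₀ hx₀
  have h2 : ⟪gradient (surrogate f) x₀, v⟫ = fderiv ℝ (surrogate f) x₀ v := by
    rw [gradient]; exact InnerProductSpace.toDual_symm_apply
  rw [h2, hder.fderiv]
  rw [intervalIntegral.integral_of_le zero_le_one, intervalIntegral.integral_of_le zero_le_one]
  rw [ContinuousLinearMap.integral_apply
    ((intervalIntegrable_iff_integrableOn_Ioc_of_le zero_le_one).1 hint) v]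
  congr 1

lemma per_t (hf : ContDiff ℝ 1 f) (hpos : ∀ y, inBox y → 0 ≤ f y) (hDR : DRSubmodular f)
    {x u : EE d} (hx : inBox x) (hu : inBox u) :
    (1 / Real.exp 1) * f u - f (hmap 1 x) ≤
      (1 - Real.exp (-1)) * ⟪gradient (surrogate f) x, u - x⟫ := by
  -- notation
  set q : ℝ → Fin d → ℝ := fun z i => Real.exp (-(z * x i)) with hq
  set A : ℝ → EE d →L[ℝ] ℝ := fun z => fderiv ℝ f (hmap z x) with hA
  set G : ℝ → ℝ := fun z => Real.exp (z - 1) * A z (diag (q z) (u - x)) with hG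
  set ψ' : ℝ → ℝ := fun z => Real.exp (z - 1) * (f (hmap z x) + A z (diag (q z) x)) with hψ'
  -- continuity facts
  have hAcont : Continuous A := (hf.continuous_fderiv one_ne_zero).comp (hmap_cont_z x)
  have hdiagcont : Continuous fun z => diag (q z) := by
    have : Continuous fun z => q z := by
      apply continuous_pi
      intro i
      exact Real.continuous_exp.comp ((continuous_id.mul continuous_const).neg)
    exact (diagL d).continuous.comp this
  have hGcont : Continuous G := by
    apply (Real.continuous_exp.comp (continuous_id.sub continuous_const)).mul
    exact hAcont.clm_apply (hdiagcont.clm_apply continuous_const)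
  have hψ'cont : Continuous ψ' := by
    apply (Real.continuous_exp.comp (continuous_id.sub continuous_const)).mul
    apply Continuous.add
    · exact hf.continuous.comp (hmap_cont_z x)
    · exact hAcont.clm_apply (hdiagcont.clm_apply continuous_const)
  -- step 1 : (1-e⁻¹) * inner = ∫ G
  have step1 : (1 - Real.exp (-1)) * ⟪gradient (surrogate f) x, u - x⟫
      = ∫ z in (0:ℝ)..1, G z := by
    rw [grad_surrogate_inner hf x hx (u - x), ← intervalIntegral.integral_const_mul]
    apply intervalIntegral.integral_congr_ae
    apply Filter.Eventually.of_forall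
    intro z hz
    rw [Set.uIoc_of_le zero_le_one] at hz
    have hz0 : z ≠ 0 := ne_of_gt hz.1
    have hcv : coefv z x = z • (q z) := by
      funext i
      simp [coefv, hq, smul_eq_mul]
    have hdz : diag (coefv z x) (u - x) = z • (diag (q z) (u - x)) := by
      rw [hcv]
      have : diag (z • q z) = z • diag (q z) := (diagL d).map_smul z (q z)
      rw [this]
      rfl
    rw [hdz, (A z).map_smul, smul_eq_mul]
    simp only [hG]
    simp only [cz]
    have hone : (1 - Real.exp (-1)) ≠ 0 := ne_of_gt one_sub_exp_neg_one_pos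
    field_simp
  -- step 2 : pointwise inequality on [0,1]
  have step2 : ∀ z ∈ Set.Icc (0:ℝ) 1, Real.exp (-1) * f u - ψ' z ≤ G z := by
    intro z hz
    have hzbox : inBox (hmap z x) := hmap_inBox hz.1 hx
    have hbbox : inBox (psum u (hmap z x)) := psum_inBox hu hzbox
    have hord : ∀ i, hmap z x i ≤ psum u (hmap z x) i := by
      intro i
      have h1 := (hu i).1
      have he0 : 0 < Real.exp (-(z * x i)) := Real.exp_pos _
      simp only [psum, hmap]
      nlinarith
    have hsubv : psum u (hmap z x) - hmap z x = diag (q z) u := by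
      ext i
      have h1 : (psum u (hmap z x) - hmap z x) i = psum u (hmap z x) i - hmap z x i := rfl
      rw [h1]
      simp only [psum, hmap, diag_apply, hq]
      ring
    have hA1 := lemA1 hf hDR hzbox hbbox hord
    rw [hsubv] at hA1
    -- lemB
    have hc0 : 0 ≤ 1 - Real.exp (-z) := by
      have h := Real.exp_le_exp.2 (show -z ≤ 0 by linarith [hz.1])
      rw [Real.exp_zero] at h
      linarith
    have hc1 : 1 - Real.exp (-z) < 1 := by
      have := Real.exp_pos (-z); linarith
    have hwc : ∀ i, hmap z x i ≤ 1 - Real.exp (-z) := by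
      intro i
      have h2 := (hx i).2
      have : Real.exp (-z) ≤ Real.exp (-(z * x i)) :=
        Real.exp_le_exp.2 (by nlinarith [hz.1])
      simp only [hmap]
      linarith
    have hB := lemB hf hDR hpos hu hzbox hc0 hc1 hwc
    have hBB : Real.exp (-z) * f u ≤ f (psum u (hmap z x)) := by
      have h : (1 - (1 - Real.exp (-z))) = Real.exp (-z) := by ring
      rw [h] at hB
      exact hB
    have epos : 0 < Real.exp (z - 1) := Real.exp_pos _
    have hexpadd : Real.exp (z - 1) * Real.exp (-z) = Real.exp (-1) := by
      rw [← Real.exp_add]; congr 1; ring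
    have hdsub : diag (q z) (u - x) = diag (q z) u - diag (q z) x := (diag (q z)).map_sub u x
    have hkey : Real.exp (-z) * f u - f (hmap z x) ≤ A z (diag (q z) u) := by
      rw [hA]
      linarith
    have hmul := mul_le_mul_of_nonneg_left hkey (le_of_lt epos)
    rw [mul_sub, ← mul_assoc, hexpadd] at hmul
    simp only [hG, hψ']
    rw [hdsub, (A z).map_sub, mul_sub, mul_add]
    linarith
  -- step 3 : FTC for ψ
  have hψderiv : ∀ z : ℝ, HasDerivAt (fun z => Real.exp (z - 1) * f (hmap z x)) (ψ' z) z := by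
    intro z
    have h1 : HasDerivAt (fun z : ℝ => Real.exp (z - 1)) (Real.exp (z - 1)) z := by
      have := (Real.hasDerivAt_exp (z - 1)).comp z ((hasDerivAt_id z).sub_const 1)
      exact this.congr_deriv (mul_one _)
    have h2 : HasDerivAt (fun z => f (hmap z x))
        ((fderiv ℝ f (hmap z x)) (WithLp.toLp 2 (fun i => x i * Real.exp (-(z * x i))))) z :=
      ((hf.differentiable one_ne_zero _).hasFDerivAt).comp_hasDerivAt z (hmap_hasDerivAt x z)
    have h3 := h1.mul h2
    have hvec : (WithLp.toLp 2 (fun i => x i * Real.exp (-(z * x i)))) = diag (q z) x := by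
      ext i
      simp only [diag_apply, hq]
      ring
    have h4 : ψ' z = Real.exp (z - 1) * f (hmap z x) +
        Real.exp (z - 1) * ((fderiv ℝ f (hmap z x)) (WithLp.toLp 2 (fun i => x i * Real.exp (-(z * x i))))) := by
      simp only [hψ', hA]
      rw [hvec]
      ring
    rw [h4]
    exact h3
  have step3 : ∫ z in (0:ℝ)..1, ψ' z
      = f (hmap 1 x) - Real.exp (-1) * f 0 := by
    have h := intervalIntegral.integral_eq_sub_of_hasDerivAt
      (f := fun z => Real.exp (z - 1) * f (hmap z x)) (f' := ψ')
      (fun z _ => hψderiv z) (hψ'cont.intervalIntegrable 0 1)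
    rw [h]
    have hm0 : hmap 0 x = 0 := by
      ext i
      simp [hmap]
    show Real.exp ((1:ℝ) - 1) * f (hmap 1 x) - Real.exp ((0:ℝ) - 1) * f (hmap 0 x) = _
    rw [hm0]
    norm_num
  -- step 4 : integral comparison
  have step4 : ∫ z in (0:ℝ)..1, (Real.exp (-1) * f u - ψ' z) ≤ ∫ z in (0:ℝ)..1, G z := by
    apply intervalIntegral.integral_mono_on zero_le_one
    · exact (continuous_const.sub hψ'cont).intervalIntegrable 0 1
    · exact hGcont.intervalIntegrable 0 1
    · exact step2
  have step5 : ∫ z in (0:ℝ)..1, (Real.exp (-1) * f u - ψ' z)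
      = Real.exp (-1) * f u - (f (hmap 1 x) - Real.exp (-1) * f 0) := by
    rw [intervalIntegral.integral_sub (intervalIntegrable_const) (hψ'cont.intervalIntegrable 0 1),
      step3]
    simp
  have hf0 : 0 ≤ f 0 := hpos 0 zero_inBox
  have hexpneg : Real.exp (-1) = 1 / Real.exp 1 := by
    rw [Real.exp_neg, one_div]
  rw [step1]
  have := step4
  rw [step5] at this
  have hfin : Real.exp (-1) * f u - f (hmap 1 x) ≤ ∫ z in (0:ℝ)..1, G z := by
    have h2 : 0 ≤ Real.exp (-1) * f 0 := mul_nonneg (le_of_lt (Real.exp_pos _)) hf0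
    linarith
  rw [hexpneg] at hfin
  exact hfin

end perT

/-- Dynamic regret transfer.
For down-closed convex `K ⊆ [0,1]^d` with `0 ∈ K` and non-negative, continuously
differentiable, `M₁`-Lipschitz, continuous DR-submodular `f_t` with surrogates `F_t`,
for any `x_1,…,x_T ∈ K` and time-varying comparators `u_1,…,u_T ∈ K`:
`(1/e) Σ_t f_t(u_t) - Σ_t f_t(h(x_t)) ≤ (1-e⁻¹) Σ_t ⟨∇F_t(x_t), u_t - x_t⟩`,
so the `(1/e)`-dynamic regret of the played points `h(x_t)` is at most `(1-e⁻¹)` times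
the dynamic linear regret of `(x_t)` on the surrogate gradients. -/
theorem stmt14 {d T : ℕ} (K : Set (EuclideanSpace ℝ (Fin d)))
    (hKbox : ∀ x ∈ K, inBox x) (hKconv : Convex ℝ K) (hKdc : DownClosed K)
    (hK0 : (0 : EuclideanSpace ℝ (Fin d)) ∈ K)
    (f : Fin T → EuclideanSpace ℝ (Fin d) → ℝ) (M₁ : ℝ)
    (hf : ∀ t, ContDiff ℝ 1 (f t)) (hpos : ∀ t x, inBox x → 0 ≤ f t x)
    (hLip : ∀ t x, inBox x → ‖gradient (f t) x‖ ≤ M₁)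
    (hDR : ∀ t, DRSubmodular (f t))
    (x : Fin T → EuclideanSpace ℝ (Fin d)) (hxK : ∀ t, x t ∈ K)
    (u : Fin T → EuclideanSpace ℝ (Fin d)) (huK : ∀ t, u t ∈ K) :
    (1 / Real.exp 1) * (∑ t, f t (u t)) - (∑ t, f t (hmap 1 (x t))) ≤
      (1 - Real.exp (-1)) *
        ∑ t, @inner ℝ _ _ (gradient (surrogate (f t)) (x t)) (u t - x t) := by
  have key : ∀ t, (1 / Real.exp 1) * f t (u t) - f t (hmap 1 (x t)) ≤
      (1 - Real.exp (-1)) * ⟪gradient (surrogate (f t)) (x t), u t - x t⟫ :=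
    fun t => per_t (hf t) (fun y hy => hpos t y hy) (hDR t) (hKbox _ (hxK t)) (hKbox _ (huK t))
  have hsum := Finset.sum_le_sum (fun t (_ : t ∈ Finset.univ) => key t)
  calc (1 / Real.exp 1) * (∑ t, f t (u t)) - (∑ t, f t (hmap 1 (x t)))
      = ∑ t, ((1 / Real.exp 1) * f t (u t) - f t (hmap 1 (x t))) := by
        rw [Finset.sum_sub_distrib, Finset.mul_sum]
    _ ≤ ∑ t, (1 - Real.exp (-1)) * ⟪gradient (surrogate (f t)) (x t), u t - x t⟫ := hsum
    _ = (1 - Real.exp (-1)) * ∑ t, ⟪gradient (surrogate (f t)) (x t), u t - x t⟫ := by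
        rw [Finset.mul_sum]
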